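/- Let A, B be n×n complex matrices such that BᴴA is positive semidefinite. Then the following conditions are equivalent: (i) BᴴA = 0; (ii) |B + γ·A| ≥ |B| for all γ ∈ ℂ (i.e., |B + γ·A| − |B| is positive semidefinite for every γ ∈ ℂ). -/

import Mathlib

open Matrix ComplexOrder

namespace Matrix.PosSemidef

/-- The square root of a positive semidefinite matrix, as in the older Mathlib
(`Matrix.PosSemidef.sqrt`, since removed). -/
noncomputable def sqrt {n 𝕜 : Type*} [Fintype n] [RCLike 𝕜] [DecidableEq n] {A : Matrix n n 𝕜}
    (hA : PosSemidef A) : Matrix n n 𝕜 :=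
  hA.1.eigenvectorUnitary.1 * diagonal ((↑) ∘ (√·) ∘ hA.1.eigenvalues) *
  (star hA.1.eigenvectorUnitary : Matrix n n 𝕜)

theorem posSemidef_sqrt {n 𝕜 : Type*} [Fintype n] [RCLike 𝕜] [DecidableEq n] {A : Matrix n n 𝕜}
    (hA : PosSemidef A) : PosSemidef hA.sqrt := by
  apply PosSemidef.mul_mul_conjTranspose_same
  refine posSemidef_diagonal_iff.mpr fun i => ?_
  simpa using Real.sqrt_nonneg (hA.1.eigenvalues i)

end Matrix.PosSemidef

/-- The absolute value `|A| = (AᴴA)^(1/2)` of a complex matrix `A`. -/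
noncomputable def matAbs {n : ℕ} (A : Matrix (Fin n) (Fin n) ℂ) : Matrix (Fin n) (Fin n) ℂ :=
  (Matrix.posSemidef_conjTranspose_mul_self A).sqrt

/-- The Schatten `p`-norm `‖A‖ₚ = (tr |A|^p)^(1/p)`, computed via the eigenvalues of `|A|`. -/
noncomputable def schattenNorm {n : ℕ} (p : ℝ) (A : Matrix (Fin n) (Fin n) ℂ) : ℝ :=
  (∑ i, ((Matrix.posSemidef_conjTranspose_mul_self A).posSemidef_sqrt.1.eigenvalues i) ^ p) ^ (1 / p)

/-! `√·` is operator monotone, so if `Bᴴ A = 0` then `|B + γA|² = |B|² + |γA|² ≥ |B|²` gives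
`|B + γA| ≥ |B|`. Conversely, `0 ≤ S ≤ T` implies `tr S² ≤ tr T²`, since
`T² - S² = (T - S) T + S (T - S)` and the trace of a product of positive matrices is nonnegative.
Applied to `S = |B|`, `T = |B - tA|` this gives `2t · re tr(BᴴA) ≤ t² · re tr(AᴴA)` for all `t > 0`,
so `tr(BᴴA) ≤ 0`; a positive semidefinite matrix with nonpositive trace is zero. -/

open Filter Topology
open scoped MatrixOrder

theorem nonpos_of_forall_pos_mul_le_sq_mul {c k : ℝ} (h : ∀ t > 0, t * c ≤ t ^ 2 * k) : c ≤ 0 := by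
  have hlim : Tendsto (fun t : ℝ => t * k) (𝓝[>] 0) (𝓝 0) :=
    ((continuous_mul_const k).tendsto' 0 0 (zero_mul k)).mono_left nhdsWithin_le_nhds
  refine ge_of_tendsto hlim (eventually_nhdsWithin_of_forall fun t (ht : 0 < t) => ?_)
  have : t * c ≤ t * (t * k) := by nlinarith [h t ht]
  exact le_of_mul_le_mul_left this ht

namespace Matrix

variable {m n 𝕜 : Type*} [Fintype n] [RCLike 𝕜]

theorem PosSemidef.sqrt_eq_cfcSqrt [DecidableEq n] {A : Matrix n n 𝕜} (hA : A.PosSemidef) :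
    hA.sqrt = CFC.sqrt A := by
  rw [CFC.sqrt_eq_real_sqrt A hA.nonneg, cfcₙ_eq_cfc, hA.1.cfc_eq]
  rfl

theorem PosSemidef.trace_mul_nonneg {P Q : Matrix n n 𝕜} (hP : P.PosSemidef)
    (hQ : Q.PosSemidef) : 0 ≤ (P * Q).trace := by
  classical
  have hsQs := hQ.conjTranspose_mul_mul_same (CFC.sqrt P)
  rw [(CFC.sqrt_nonneg P).posSemidef.isHermitian.eq] at hsQs
  rw [← CFC.sqrt_mul_sqrt_self P hP.nonneg, mul_assoc, trace_mul_comm]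
  exact hsQs.trace_nonneg

theorem PosSemidef.trace_mul_self_le_trace_mul_self {S T : Matrix n n 𝕜} (hS : S.PosSemidef)
    (hST : S ≤ T) : (S * S).trace ≤ (T * T).trace := by
  have hTS : (T - S).PosSemidef := hST
  have hT : T.PosSemidef := by simpa using hS.add hTS
  have hdiff : T * T - S * S = (T - S) * T + S * (T - S) := by noncomm_ring
  rw [← sub_nonneg, ← trace_sub, hdiff, trace_add]
  exact add_nonneg (hTS.trace_mul_nonneg hT) (hS.trace_mul_nonneg hTS)

theorem PosSemidef.eq_zero_of_re_trace_nonpos {A : Matrix n n 𝕜} (hA : A.PosSemidef)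
    (h : RCLike.re A.trace ≤ 0) : A = 0 := by
  have htrace : A.trace ≤ 0 := RCLike.nonpos_iff.mpr ⟨h, (RCLike.nonneg_iff.mp hA.trace_nonneg).2⟩
  exact hA.trace_eq_zero_iff.mp (le_antisymm htrace hA.trace_nonneg)

theorem conjTranspose_add_mul_self_of_conjTranspose_mul_eq_zero {A B : Matrix n m 𝕜}
    (h : Bᴴ * A = 0) : (B + A)ᴴ * (B + A) = Bᴴ * B + Aᴴ * A := by
  have h' : Aᴴ * B = 0 := by simpa using congrArg conjTranspose h
  simp only [conjTranspose_add, Matrix.add_mul, Matrix.mul_add, h, h', add_zero, zero_add]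

theorem re_trace_conjTranspose_sub_smul_mul_self [Fintype m] (A B : Matrix n m 𝕜) (t : ℝ) :
    RCLike.re ((B - (t : 𝕜) • A)ᴴ * (B - (t : 𝕜) • A)).trace =
      RCLike.re (Bᴴ * B).trace - 2 * t * RCLike.re (Bᴴ * A).trace +
        t ^ 2 * RCLike.re (Aᴴ * A).trace := by
  have hAB : RCLike.re (Aᴴ * B).trace = RCLike.re (Bᴴ * A).trace := by
    rw [← conjTranspose_conjTranspose B, ← conjTranspose_mul, trace_conjTranspose,
      RCLike.star_def, RCLike.conj_re, conjTranspose_conjTranspose]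
  simp only [conjTranspose_sub, conjTranspose_smul, Matrix.sub_mul, Matrix.mul_sub,
    Matrix.smul_mul, Matrix.mul_smul, trace_sub, trace_smul, RCLike.star_def, RCLike.conj_ofReal,
    map_sub, smul_eq_mul, RCLike.re_ofReal_mul, hAB]
  ring

end Matrix

open Matrix

section matAbs

variable {n : ℕ}

theorem matAbs_mul_self (A : Matrix (Fin n) (Fin n) ℂ) : matAbs A * matAbs A = Aᴴ * A := by
  rw [matAbs, PosSemidef.sqrt_eq_cfcSqrt]
  exact CFC.sqrt_mul_sqrt_self _ (posSemidef_conjTranspose_mul_self A).nonneg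

open scoped Matrix.Norms.L2Operator in
theorem matAbs_le_matAbs_of_conjTranspose_mul_self_le {X Y : Matrix (Fin n) (Fin n) ℂ} (h : Xᴴ * X ≤ Yᴴ * Y) :
    matAbs X ≤ matAbs Y := by
  rw [matAbs, matAbs, PosSemidef.sqrt_eq_cfcSqrt, PosSemidef.sqrt_eq_cfcSqrt]
  exact CFC.sqrt_le_sqrt _ _ h

theorem trace_conjTranspose_mul_self_le_of_matAbs_le {X Y : Matrix (Fin n) (Fin n) ℂ}
    (h : matAbs X ≤ matAbs Y) : (Xᴴ * X).trace ≤ (Yᴴ * Y).trace := by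
  rw [← matAbs_mul_self, ← matAbs_mul_self]
  exact (PosSemidef.posSemidef_sqrt _).trace_mul_self_le_trace_mul_self h

end matAbs

theorem conjTranspose_mul_eq_zero_iff_abs_dominates {n : ℕ}
    (A B : Matrix (Fin n) (Fin n) ℂ) (hBA : (Bᴴ * A).PosSemidef) :
    Bᴴ * A = 0 ↔ ∀ γ : ℂ, (matAbs (B + γ • A) - matAbs B).PosSemidef := by
  constructor
  · intro hBA0 γ
    apply matAbs_le_matAbs_of_conjTranspose_mul_self_le
    rw [conjTranspose_add_mul_self_of_conjTranspose_mul_eq_zero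
      (by rw [Matrix.mul_smul, hBA0, smul_zero])]
    exact le_add_of_nonneg_right (posSemidef_conjTranspose_mul_self _).nonneg
  · intro h
    have hc : 2 * (Bᴴ * A).trace.re ≤ 0 :=
      nonpos_of_forall_pos_mul_le_sq_mul (k := (Aᴴ * A).trace.re) fun t ht => by
        have hle := Complex.re_le_re (trace_conjTranspose_mul_self_le_of_matAbs_le (h (-t)))
        rw [neg_smul, ← sub_eq_add_neg] at hle
        have hexp := re_trace_conjTranspose_sub_smul_mul_self A B t
        simp only [RCLike.re_to_complex, Complex.coe_algebraMap] at hexp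
        linarith
    exact hBA.eq_zero_of_re_trace_nonpos (by simp only [RCLike.re_to_complex]; linarith)
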